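/- arXiv:1407.4495 — 8 statements merged into one kernel-verified Lean document; each statement's English description precedes it below -/
import Mathlib

section
/- Let G be a finite group, p a prime, and suppose G has three normal subgroups N₁, N₂, N₃ such that the product N₁N₂N₃ is not equal to N_iN_j for any pair i ≠ j. If every proper subgroup of N₁N₂N₃ has abelian Sylow p-subgroups, then the Sylow p-subgroups of N₁N₂N₃ are abelian. -/
/-!
Write `T = N₁N₂N₃` and let `P` be a Sylow `p`-subgroup of `T`. For normal `N, K` a Sylow subgroup
meets `N`, `K`, `N ∩ K` and `NK` in Sylow subgroups of each, and comparing orders through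
`|NK| |N ∩ K| = |N| |K|` gives `P ∩ NK = (P ∩ N)(P ∩ K)`. Hence `P = (P ∩ N₁)(P ∩ N₂)(P ∩ N₃)`.
For `i ≠ j` the subgroup `(P ∩ Nᵢ)(P ∩ Nⱼ)` is a `p`-subgroup of the proper subgroup `NᵢNⱼ`, so
it lies in an abelian Sylow subgroup of `NᵢNⱼ`; thus the three factors commute pairwise and with
themselves, and `P` is abelian.
-/

open Subgroup

namespace Subgroup

variable {G : Type*} [Group G]

theorem card_inf_mul_relIndex (H K : Subgroup G) :
    Nat.card ↥(H ⊓ K) * H.relIndex K = Nat.card K := by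
  rw [← inf_relIndex_right H K, ← relIndex_bot_left, ← relIndex_bot_left]
  exact relIndex_mul_relIndex ⊥ (H ⊓ K) K bot_le inf_le_right

theorem relIndex_sup_right_of_le_normalizer {H N : Subgroup G}
    (hH : H ≤ normalizer (N : Set G)) : N.relIndex (H ⊔ N) = N.relIndex H :=
  letI := normal_subgroupOf_of_le_normalizer hH
  letI := normal_subgroupOf_sup_of_le_normalizer hH
  Nat.card_congr (QuotientGroup.quotientInfEquivProdNormalizerQuotient H N hH).toEquiv.symm

theorem card_sup_mul_card_inf {H N : Subgroup G} (hH : H ≤ normalizer (N : Set G)) :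
    Nat.card ↥(H ⊔ N) * Nat.card ↥(H ⊓ N) = Nat.card H * Nat.card N := by
  have hsup := card_inf_mul_relIndex N (H ⊔ N)
  rw [inf_of_le_left le_sup_right, relIndex_sup_right_of_le_normalizer hH] at hsup
  rw [← hsup, ← card_inf_mul_relIndex N H, inf_comm]
  ring

theorem relIndex_sup_of_le_normalizer [Finite G] {H N : Subgroup G}
    (hH : H ≤ normalizer (N : Set G)) : H.relIndex (H ⊔ N) = H.relIndex N := by
  have hsup := card_inf_mul_relIndex H (H ⊔ N)
  rw [inf_of_le_left le_sup_left] at hsup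
  refine mul_left_cancel₀
    (mul_pos (Nat.card_pos (α := H)) (Nat.card_pos (α := ↥(H ⊓ N)))).ne' ?_
  calc Nat.card H * Nat.card ↥(H ⊓ N) * H.relIndex (H ⊔ N)
      = Nat.card ↥(H ⊔ N) * Nat.card ↥(H ⊓ N) := by rw [← hsup]; ring
    _ = Nat.card H * Nat.card N := card_sup_mul_card_inf hH
    _ = Nat.card H * Nat.card ↥(H ⊓ N) * H.relIndex N := by
      rw [← card_inf_mul_relIndex H N]; ring

theorem centralizer_sup (H K : Subgroup G) :
    centralizer ((H ⊔ K : Subgroup G) : Set G) =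
      centralizer (H : Set G) ⊓ centralizer (K : Set G) :=
  le_antisymm
    (le_inf (centralizer_le (le_sup_left (b := K))) (centralizer_le (le_sup_right (a := H))))
    (le_centralizer_iff.mp (sup_le (le_centralizer_iff.mp inf_le_left)
      (le_centralizer_iff.mp inf_le_right)))

theorem isMulCommutative_sup_sup {A B C : Subgroup G} (hAB : IsMulCommutative ↥(A ⊔ B))
    (hAC : IsMulCommutative ↥(A ⊔ C)) (hBC : IsMulCommutative ↥(B ⊔ C)) :
    IsMulCommutative ↥(A ⊔ B ⊔ C) := by
  -- Everything unfolds to statements `X ≤ centralizer Y` with `X, Y ∈ {A, B, C}`.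
  simp only [← le_centralizer_iff_isMulCommutative, centralizer_sup, sup_le_iff,
    le_inf_iff] at *
  tauto

end Subgroup

theorem IsPGroup.isMulCommutative_of_le {G : Type*} [Group G] {p : ℕ} [Fact p.Prime]
    {K Q : Subgroup G} (hK : ∀ S : Sylow p K, IsMulCommutative S) (hQ : IsPGroup p Q)
    (hQK : Q ≤ K) : IsMulCommutative Q := by
  obtain ⟨S, hS⟩ := (hQ.of_equiv (subgroupOfEquivOfLe hQK).symm).exists_le_sylow
  have := hK S
  have : IsMulCommutative (Q.subgroupOf K) := le_centralizer_iff_isMulCommutative.mp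
    ((hS.trans (le_centralizer (S : Subgroup K))).trans (centralizer_le hS))
  have : IsMulCommutative ((Q.subgroupOf K).map K.subtype) := inferInstance
  rwa [subgroupOf_map_subtype, inf_of_le_left hQK] at this

namespace Sylow

variable {G : Type*} [Group G] [Finite G] {p : ℕ} [Fact p.Prime]

theorem card_inf_of_normal (P : Sylow p G) (N : Subgroup G) [N.Normal] :
    Nat.card ↥((P : Subgroup G) ⊓ N) = p ^ (Nat.card N).factorization p := by
  have hp : p.Prime := Fact.out
  obtain ⟨k, hk⟩ := (P.isPGroup'.to_inf_left (K := N)).exists_card_eq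
  have hindex : ¬ p ∣ (P : Subgroup G).relIndex N := by
    rw [← relIndex_sup_of_le_normalizer le_normalizer_of_normal]
    exact fun h => P.not_dvd_index (h.trans (relIndex_dvd_index_of_le le_sup_left))
  have hcoprime : (p ^ k).Coprime ((P : Subgroup G).relIndex N) :=
    ((hp.coprime_iff_not_dvd).mpr hindex).pow_left k
  rw [hk, ← card_inf_mul_relIndex (P : Subgroup G) N, hk,
    Nat.factorization_mul_apply_of_coprime hcoprime, hp.factorization_pow,
    Nat.factorization_eq_zero_of_not_dvd hindex]
  simp

theorem inf_sup_left_of_normal (P : Sylow p G) (N K : Subgroup G) [N.Normal] [K.Normal] :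
    (P : Subgroup G) ⊓ (N ⊔ K) = ((P : Subgroup G) ⊓ N) ⊔ ((P : Subgroup G) ⊓ K) := by
  have hp : p.Prime := Fact.out
  have hle : (P : Subgroup G) ⊓ N ⊔ P ⊓ K ≤ (P : Subgroup G) ⊓ (N ⊔ K) :=
    sup_le (inf_le_inf_left _ le_sup_left) (inf_le_inf_left _ le_sup_right)
  refine (eq_of_le_of_card_ge hle ?_).symm
  have hnorm :
      (P : Subgroup G) ⊓ N ≤ normalizer (((P : Subgroup G) ⊓ K : Subgroup G) : Set G) :=
    (le_inf (inf_le_left.trans le_normalizer) le_normalizer_of_normal).trans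
      inf_normalizer_le_normalizer_inf
  have hcard := card_sup_mul_card_inf hnorm
  have hval : (Nat.card ↥(N ⊔ K)).factorization p + (Nat.card ↥(N ⊓ K)).factorization p
      = (Nat.card N).factorization p + (Nat.card K).factorization p := by
    rw [← Finsupp.add_apply, ← Finsupp.add_apply, ← Nat.factorization_mul Nat.card_pos.ne'
      Nat.card_pos.ne', ← Nat.factorization_mul Nat.card_pos.ne' Nat.card_pos.ne',
      card_sup_mul_card_inf le_normalizer_of_normal]
  rw [← inf_inf_distrib_left, card_inf_of_normal, card_inf_of_normal, card_inf_of_normal,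
    ← pow_add, ← hval, pow_add] at hcard
  rw [card_inf_of_normal, Nat.eq_of_mul_eq_mul_right (pow_pos hp.pos _) hcard]

theorem isMulCommutative_of_sup_sup (P : Sylow p G) {N₁ N₂ N₃ : Subgroup G}
    [N₁.Normal] [N₂.Normal] [N₃.Normal]
    (htop : N₁ ⊔ N₂ ⊔ N₃ = ⊤) (h₁₂ : ∀ S : Sylow p ↥(N₁ ⊔ N₂), IsMulCommutative S)
    (h₁₃ : ∀ S : Sylow p ↥(N₁ ⊔ N₃), IsMulCommutative S)
    (h₂₃ : ∀ S : Sylow p ↥(N₂ ⊔ N₃), IsMulCommutative S) :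
    IsMulCommutative P := by
  have hP : (P : Subgroup G) = (P : Subgroup G) ⊓ N₁ ⊔ P ⊓ N₂ ⊔ P ⊓ N₃ := by
    rw [← P.inf_sup_left_of_normal, ← P.inf_sup_left_of_normal, htop, inf_top_eq]
  have hpair : ∀ {M M' : Subgroup G}, (∀ S : Sylow p ↥(M ⊔ M'), IsMulCommutative S) →
      IsMulCommutative ↥((P : Subgroup G) ⊓ M ⊔ P ⊓ M') := fun hM =>
    (P.isPGroup'.to_le (sup_le inf_le_left inf_le_left)).isMulCommutative_of_le hM
      (sup_le_sup inf_le_right inf_le_right)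
  rw [hP]
  exact isMulCommutative_sup_sup (hpair h₁₂) (hpair h₁₃) (hpair h₂₃)

end Sylow

/-- If `N₁, N₂, N₃ ⊴ G` with `N₁N₂N₃ ≠ NᵢNⱼ` for all pairs `i ≠ j`, and every proper
subgroup of `N₁N₂N₃` has abelian Sylow `p`-subgroups, then the Sylow `p`-subgroups of
`N₁N₂N₃` are abelian. -/
theorem sylow_abelian_of_three_normals {G : Type*} [Group G] [Finite G] (p : ℕ)
    [Fact p.Prime] (N₁ N₂ N₃ : Subgroup G)
    (h1 : N₁.Normal) (h2 : N₂.Normal) (h3 : N₃.Normal)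
    (h12 : N₁ ⊔ N₂ ⊔ N₃ ≠ N₁ ⊔ N₂) (h13 : N₁ ⊔ N₂ ⊔ N₃ ≠ N₁ ⊔ N₃)
    (h23 : N₁ ⊔ N₂ ⊔ N₃ ≠ N₂ ⊔ N₃)
    (hab : ∀ K : Subgroup ↥(N₁ ⊔ N₂ ⊔ N₃), K ≠ ⊤ →
      ∀ P : Sylow p ↥K, IsMulCommutative ↥(P : Subgroup ↥K)) :
    ∀ P : Sylow p ↥(N₁ ⊔ N₂ ⊔ N₃), IsMulCommutative ↥(P : Subgroup ↥(N₁ ⊔ N₂ ⊔ N₃)) := by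
  set T := N₁ ⊔ N₂ ⊔ N₃
  intro P
  have hN₁ : N₁ ≤ T := le_sup_left.trans le_sup_left
  have hN₂ : N₂ ≤ T := le_sup_right.trans le_sup_left
  have hN₃ : N₃ ≤ T := le_sup_right
  have hproper : ∀ {A B : Subgroup G}, A ≤ T → B ≤ T → T ≠ A ⊔ B →
      A.subgroupOf T ⊔ B.subgroupOf T ≠ ⊤ := fun hA hB hne h =>
    hne (le_antisymm (subgroupOf_eq_top.mp (subgroupOf_sup hA hB ▸ h)) (sup_le hA hB))
  have := h1.subgroupOf T
  have := h2.subgroupOf T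
  have := h3.subgroupOf T
  refine P.isMulCommutative_of_sup_sup ?_ (hab _ (hproper hN₁ hN₂ h12))
    (hab _ (hproper hN₁ hN₃ h13)) (hab _ (hproper hN₂ hN₃ h23))
  rw [← subgroupOf_sup hN₁ hN₂, ← subgroupOf_sup (sup_le hN₁ hN₂) hN₃, subgroupOf_self]
end

section
/- Let G be a finite group with normal subgroups N and K such that G = NK, and let P be a Sylow p-subgroup of G. Then P = (P ∩ N)(P ∩ K). -/
/-!
Since `[N : P ∩ N] = [PN : P]` divides `[G : P]`, `P ∩ N` is a Sylow subgroup of `N`. As `G = NK`,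
`N` maps onto `G/K`, so the image of `P ∩ N` in `G/K` is Sylow; it lies in the `p`-group image of
`P`, hence equals it. So each `x ∈ P` has the form `a k` with `a ∈ P ∩ N` and `k = a⁻¹x ∈ P ∩ K`.
-/

open scoped Pointwise

namespace Subgroup

variable {G : Type*} [Group G]

theorem relIndex_sup_normal [Finite G] (H K : Subgroup G) [K.Normal] :
    H.relIndex (H ⊔ K) = H.relIndex K := by
  have hH := relIndex_mul_relIndex (H ⊓ K) H (H ⊔ K) inf_le_left le_sup_left
  have hK := relIndex_mul_relIndex (H ⊓ K) K (H ⊔ K) inf_le_right le_sup_right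
  rw [inf_relIndex_left, ← relIndex_sup_right H K] at hH
  rw [inf_relIndex_right, ← hH, mul_comm] at hK
  exact Nat.eq_of_mul_eq_mul_left (Nat.pos_of_ne_zero index_ne_zero_of_finite) hK.symm

theorem mk'_comp_subtype_surjective {N K : Subgroup G} [K.Normal] (hNK : N ⊔ K = ⊤) :
    Function.Surjective ((QuotientGroup.mk' K).comp N.subtype) := by
  rintro ⟨g⟩
  obtain ⟨n, hn, k, hk, rfl⟩ : g ∈ (N : Set G) * K := by
    rw [← mul_normal, hNK]; trivial
  exact ⟨⟨n, hn⟩, QuotientGroup.eq.mpr (by simpa using hk)⟩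

theorem coe_eq_mul_inf_of_map_mk'_eq {H M K : Subgroup G} [K.Normal] (hMH : M ≤ H)
    (h : M.map (QuotientGroup.mk' K) = H.map (QuotientGroup.mk' K)) :
    (H : Set G) = (M : Set G) * ((H ⊓ K : Subgroup G) : Set G) := by
  refine subset_antisymm (fun x hx => ?_) ?_
  · obtain ⟨m, hm, hmx⟩ : (x : G ⧸ K) ∈ M.map (QuotientGroup.mk' K) := h ▸ mem_map_of_mem _ hx
    have hm_inv_x : m⁻¹ * x ∈ K := QuotientGroup.eq.mp hmx
    exact ⟨m, hm, m⁻¹ * x, ⟨mul_mem (H.inv_mem (hMH hm)) hx, hm_inv_x⟩, mul_inv_cancel_left m x⟩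
  · rintro _ ⟨m, hm, y, hy, rfl⟩
    exact mul_mem (hMH hm) hy.1

end Subgroup

namespace Sylow

variable {G : Type*} [Group G] [Finite G] {p : ℕ} [Fact p.Prime]

theorem not_dvd_relIndex_normal (P : Sylow p G) (N : Subgroup G) [N.Normal] :
    ¬ p ∣ (P : Subgroup G).relIndex N := by
  rw [← Subgroup.relIndex_sup_normal]
  exact fun hp => P.not_dvd_index (hp.trans (Subgroup.relIndex_dvd_index_of_le le_sup_left))

def subgroupOfNormal (P : Sylow p G) (N : Subgroup G) [N.Normal] : Sylow p N :=
  P.isPGroup'.comap_subtype.toSylow (P.not_dvd_relIndex_normal N)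

theorem map_inf_normal_eq_map (P : Sylow p G) {N K : Subgroup G} [N.Normal] [K.Normal]
    (hNK : N ⊔ K = ⊤) :
    ((P : Subgroup G) ⊓ N).map (QuotientGroup.mk' K) =
      (P : Subgroup G).map (QuotientGroup.mk' K) := by
  let Q := (P.subgroupOfNormal N).mapSurjective (Subgroup.mk'_comp_subtype_surjective hNK)
  have hQ : (Q : Subgroup (G ⧸ K)) = ((P : Subgroup G) ⊓ N).map (QuotientGroup.mk' K) := by
    rw [coe_mapSurjective, ← Subgroup.map_map]
    exact congrArg _ (Subgroup.subgroupOf_map_subtype _ _)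
  rw [← hQ]
  exact (Q.is_maximal' (P.isPGroup'.map _) (hQ ▸ Subgroup.map_mono inf_le_left)).symm

end Sylow

/-- If `N, K ⊴ G` with `G = NK` and `P` is a Sylow `p`-subgroup of `G`, then
`P = (P ∩ N)(P ∩ K)`. -/
theorem sylow_eq_inf_mul_inf {G : Type*} [Group G] [Finite G] (p : ℕ) [Fact p.Prime]
    (N K : Subgroup G) [N.Normal] [K.Normal]
    (h : (N : Set G) * (K : Set G) = Set.univ) (P : Sylow p G) :
    ((P : Subgroup G) : Set G) =
      (((P : Subgroup G) ⊓ N : Subgroup G) : Set G) *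
        (((P : Subgroup G) ⊓ K : Subgroup G) : Set G) := by
  have hNK : N ⊔ K = ⊤ := SetLike.coe_injective (by rw [Subgroup.mul_normal, h, Subgroup.coe_top])
  exact Subgroup.coe_eq_mul_inf_of_map_mk'_eq inf_le_left (P.map_inf_normal_eq_map hNK)
end

section
/- Let G be a finite group, p a prime, and N a normal subgroup of G. If the conjugacy class size of every p-element of G is coprime to p, then the same holds for every p-element of N and for every p-element of G/N. -/
/-!
For `x ∈ N`, `C_N(x) = C_G(x) ∩ N` and `|N : C_G(x) ∩ N| = |C_G(x) N : C_G(x)|` divides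
`|G : C_G(x)|`. For a coset `gN` of `p`-power order, write `o(g) = p^a m` with `p ∤ m`; then
`g^m` is a `p`-element of `G`, and `gN` is a power of `g^m N` because `m` is prime to the order
of `gN`. Hence `C_G(g^m)` maps into `C_{G/N}(gN)`, and `|G/N : C_{G/N}(gN)|` divides
`|G : C_G(g^m)|`.
-/

namespace Subgroup

variable {G : Type*} [Group G]

theorem centralizer_singleton_subgroupOf (K : Subgroup G) (x : K) :
    centralizer {x} = (centralizer {(x : G)}).subgroupOf K := by
  ext y
  simp [mem_subgroupOf, mem_centralizer_singleton_iff, Subtype.ext_iff]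

theorem relIndex_eq_relIndex_sup_of_normal [Finite G] (H N : Subgroup G) [N.Normal] :
    H.relIndex N = H.relIndex (H ⊔ N) := by
  have hN : N.relIndex H ≠ 0 := index_ne_zero_of_finite
  have through_N : H.relIndex N * N.relIndex H = (H ⊓ N).relIndex (H ⊔ N) := by
    rw [← relIndex_sup_right H N, ← inf_relIndex_right H N]
    exact relIndex_mul_relIndex _ _ _ inf_le_right le_sup_right
  have through_H : N.relIndex H * H.relIndex (H ⊔ N) = (H ⊓ N).relIndex (H ⊔ N) := by
    rw [← inf_relIndex_left H N]
    exact relIndex_mul_relIndex _ _ _ inf_le_left le_sup_left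
  exact Nat.eq_of_mul_eq_mul_left (Nat.pos_of_ne_zero hN)
    (by rw [mul_comm, through_N, through_H])

theorem relIndex_dvd_index_of_normal_right [Finite G] (H N : Subgroup G) [N.Normal] :
    H.relIndex N ∣ H.index :=
  relIndex_eq_relIndex_sup_of_normal H N ▸ relIndex_dvd_index_of_le le_sup_left

theorem index_centralizer_dvd_of_normal [Finite G] (N : Subgroup G) [N.Normal] (x : N) :
    (centralizer {x} : Subgroup N).index ∣ (centralizer {(x : G)}).index := by
  rw [centralizer_singleton_subgroupOf]
  exact relIndex_dvd_index_of_normal_right _ N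

theorem centralizer_singleton_le_of_mem_zpowers {a b : G} (h : a ∈ zpowers b) :
    centralizer {b} ≤ centralizer {a} := by
  obtain ⟨k, rfl⟩ := h
  intro y hy
  rw [mem_centralizer_singleton_iff] at hy ⊢
  exact ((Commute.zpow_left hy.symm k).eq).symm

theorem index_centralizer_dvd_of_mem_zpowers_map {H : Type*} [Group H] {f : G →* H}
    (hf : Function.Surjective f) {a : H} {b : G} (h : a ∈ zpowers (f b)) :
    (centralizer {a}).index ∣ (centralizer {b}).index := by
  have hmap : (centralizer {b}).map f ≤ centralizer {a} := by
    refine (map_centralizer_le_centralizer_image _ f).trans ?_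
    rw [Set.image_singleton]
    exact centralizer_singleton_le_of_mem_zpowers h
  exact (index_dvd_of_le hmap).trans (index_map_dvd _ hf)

end Subgroup

section PPart

variable {G : Type*} [Group G]

theorem orderOf_pow_ordCompl {g : G} (hg : orderOf g ≠ 0) (p : ℕ) :
    orderOf (g ^ ordCompl[p] (orderOf g)) = ordProj[p] (orderOf g) := by
  have hm : ordCompl[p] (orderOf g) ≠ 0 := (Nat.ordCompl_pos p hg).ne'
  rw [orderOf_pow_of_dvd hm (Nat.ordCompl_dvd _ p)]
  exact Nat.div_eq_of_eq_mul_left (Nat.pos_of_ne_zero hm)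
    (Nat.ordProj_mul_ordCompl_eq_self _ p).symm

theorem mem_zpowers_pow_ordCompl {x : G} {p n : ℕ} (hp : p.Prime) (hx : orderOf x = p ^ n)
    {m : ℕ} (hm : m ≠ 0) : x ∈ Subgroup.zpowers (x ^ ordCompl[p] m) := by
  rw [mem_zpowers_pow_iff, hx]
  exact (Nat.coprime_ordCompl hp hm).symm.pow_right n

end PPart

/-- If every `p`-element of `G` has class size coprime to `p`, then the same holds in any
normal subgroup `N` and in the quotient `G/N`. -/
theorem pElement_class_size_normal_and_quotient {G : Type*} [Group G] [Finite G] (p : ℕ)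
    [Fact p.Prime] (N : Subgroup G) [N.Normal]
    (h : ∀ x : G, (∃ n : ℕ, orderOf x = p ^ n) → ¬ p ∣ (Subgroup.centralizer {x}).index) :
    (∀ x : ↥N, (∃ n : ℕ, orderOf x = p ^ n) →
      ¬ p ∣ (Subgroup.centralizer {x} : Subgroup ↥N).index) ∧
    (∀ x : G ⧸ N, (∃ n : ℕ, orderOf x = p ^ n) →
      ¬ p ∣ (Subgroup.centralizer {x} : Subgroup (G ⧸ N)).index) := by
  constructor
  · rintro x ⟨n, hx⟩ hdvd
    exact h x ⟨n, by rwa [Subgroup.orderOf_coe]⟩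
      (hdvd.trans (Subgroup.index_centralizer_dvd_of_normal N x))
  · rintro x ⟨n, hx⟩ hdvd
    obtain ⟨g, rfl⟩ := QuotientGroup.mk'_surjective N x
    have hg : orderOf g ≠ 0 := (orderOf_pos g).ne'
    have hx_mem : QuotientGroup.mk' N g ∈
        Subgroup.zpowers (QuotientGroup.mk' N (g ^ ordCompl[p] (orderOf g))) := by
      rw [map_pow]
      exact mem_zpowers_pow_ordCompl Fact.out hx hg
    exact h _ ⟨_, orderOf_pow_ordCompl hg p⟩ (hdvd.trans
      (Subgroup.index_centralizer_dvd_of_mem_zpowers_map (QuotientGroup.mk'_surjective N) hx_mem))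
end

section
/- Let G be a finite group, p a prime, and N a normal subgroup with p not dividing the index |G : N|. If every p-element of N has conjugacy class size in N coprime to p, then every p-element of G has conjugacy class size in G coprime to p; moreover the Sylow p-subgroups of N are (non)abelian iff those of G are. -/
/-!
A `p`-element of `G` maps to an element of `G ⧸ N` whose order is a power of `p` dividing
`|G : N|`, hence lies in `N`; so `N` contains every `p`-subgroup of `G`, and `G` and `N` have
the same `p`-subgroups. For a `p`-element `x`, `|G : C_G(x)|` divides
`|N : C_N(x)| * |G : N|`, and neither factor is divisible by `p`.
-/

open Subgroup

section

variable {G : Type*} [Group G]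

theorem Subgroup.mem_of_coprime_orderOf_index {N : Subgroup G} [N.Normal] {x : G}
    (hx : (orderOf x).Coprime N.index) : x ∈ N := by
  have hmap : orderOf (x : G ⧸ N) ∣ orderOf x := orderOf_map_dvd (QuotientGroup.mk' N) x
  have hcard : orderOf (x : G ⧸ N) ∣ N.index := _root_.orderOf_dvd_natCard _
  rw [← QuotientGroup.eq_one_iff, ← orderOf_eq_one_iff]
  exact Nat.eq_one_of_dvd_coprimes hx hmap hcard

theorem Subgroup.mem_of_orderOf_eq_prime_pow_of_not_dvd_index {p : ℕ} [Fact p.Prime]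
    {N : Subgroup G} [N.Normal] (hind : ¬ p ∣ N.index) {x : G} {n : ℕ}
    (hx : orderOf x = p ^ n) : x ∈ N :=
  mem_of_coprime_orderOf_index <|
    hx ▸ ((Nat.Prime.coprime_iff_not_dvd Fact.out).mpr hind).pow_left n

theorem Subgroup.le_of_isPGroup_of_not_dvd_index {p : ℕ} [Fact p.Prime] {N : Subgroup G}
    [N.Normal] (hind : ¬ p ∣ N.index) {H : Subgroup G} (hH : IsPGroup p H) : H ≤ N := by
  intro g hg
  obtain ⟨k, hk⟩ := IsPGroup.iff_orderOf.mp hH ⟨g, hg⟩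
  rw [orderOf_mk] at hk
  exact mem_of_orderOf_eq_prime_pow_of_not_dvd_index hind hk

theorem Subgroup.index_dvd_index_subgroupOf_mul_index (K N : Subgroup G) :
    K.index ∣ (K.subgroupOf N).index * N.index := by
  have hinf : (K ⊓ N).index = (K.subgroupOf N).index * N.index :=
    (inf_relIndex_right K N ▸ relIndex_mul_index inf_le_right).symm
  exact hinf ▸ index_dvd_of_le inf_le_left

theorem Subgroup.centralizer_singleton_eq_subgroupOf {N : Subgroup G} (x : N) :
    centralizer {x} = (centralizer {(x : G)}).subgroupOf N := by
  ext y
  simp only [mem_centralizer_singleton_iff, mem_subgroupOf, ← Subtype.coe_inj, coe_mul]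

theorem Subgroup.isMulCommutative_of_le {H K : Subgroup G} (hHK : H ≤ K) [IsMulCommutative K] :
    IsMulCommutative H :=
  .of_setLike_mul_comm fun _ ha _ hb ↦ setLike_mul_comm (hHK ha) (hHK hb)

theorem forall_sylow_isMulCommutative_iff {p : ℕ} [Finite G] :
    (∀ P : Sylow p G, IsMulCommutative P) ↔
      ∀ H : Subgroup G, IsPGroup p H → IsMulCommutative H := by
  refine ⟨fun hP H hH ↦ ?_, fun hH P ↦ hH P P.isPGroup'⟩
  obtain ⟨P, hHP⟩ := hH.exists_le_sylow
  have := hP P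
  exact isMulCommutative_of_le hHP

theorem forall_isPGroup_isMulCommutative_iff_of_not_dvd_index {p : ℕ} [Fact p.Prime]
    {N : Subgroup G} [N.Normal] (hind : ¬ p ∣ N.index) :
    (∀ H : Subgroup N, IsPGroup p H → IsMulCommutative H) ↔
      ∀ H : Subgroup G, IsPGroup p H → IsMulCommutative H := by
  constructor
  · intro hN H hH
    have : IsMulCommutative (H.subgroupOf N) := hN _ hH.comap_subtype
    rw [← inf_of_le_left (le_of_isPGroup_of_not_dvd_index hind hH), ← subgroupOf_map_subtype]
    infer_instance
  · intro hG H hH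
    have := hG _ (hH.map N.subtype)
    rw [← comap_map_eq_self_of_injective N.subtype_injective H]
    exact comap_injective_isMulCommutative _ N.subtype_injective

end

/-- Let `N ⊴ G` with `p ∤ |G : N|`. If every `p`-element of `N` has class size in `N`
coprime to `p`, then every `p`-element of `G` has class size in `G` coprime to `p`;
moreover the Sylow `p`-subgroups of `N` are abelian iff those of `G` are. -/
theorem clp_lift_from_normal {G : Type*} [Group G] [Finite G] (p : ℕ) [Fact p.Prime]
    (N : Subgroup G) [N.Normal] (hind : ¬ p ∣ N.index)
    (h : ∀ x : ↥N, (∃ n : ℕ, orderOf x = p ^ n) →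
      ¬ p ∣ (Subgroup.centralizer {x} : Subgroup ↥N).index) :
    (∀ x : G, (∃ n : ℕ, orderOf x = p ^ n) → ¬ p ∣ (Subgroup.centralizer {x}).index) ∧
    ((∀ P : Sylow p ↥N, IsMulCommutative ↥(P : Subgroup ↥N)) ↔
      (∀ P : Sylow p G, IsMulCommutative ↥(P : Subgroup G))) := by
  refine ⟨fun x ⟨n, hn⟩ hdvd ↦ ?_, ?_⟩
  · have hxN : x ∈ N := mem_of_orderOf_eq_prime_pow_of_not_dvd_index hind hn
    have hN := h ⟨x, hxN⟩ ⟨n, by rw [orderOf_mk, hn]⟩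
    rw [centralizer_singleton_eq_subgroupOf] at hN
    have := hdvd.trans (index_dvd_index_subgroupOf_mul_index _ N)
    exact (Nat.Prime.dvd_mul Fact.out).mp this |>.elim hN hind
  · rw [forall_sylow_isMulCommutative_iff, forall_sylow_isMulCommutative_iff]
    exact forall_isPGroup_isMulCommutative_iff_of_not_dvd_index hind
end

section
/- Let G be a finite group, p a prime, and N a normal subgroup with p not dividing |N|. If every p-element of G/N has class size in G/N coprime to p, then every p-element of G has class size in G coprime to p; moreover G is cl_p if and only if G/N is cl_p. -/
/-!
A `p`-subgroup `K` of `G` meets the `p'`-subgroup `N` trivially, so `G → G/N` is injective on `K`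
and two elements of `K` commute as soon as their images do. Sylow subgroups of `G/N` are the
images of those of `G`, so one is abelian iff the other is. For a `p`-element `x`, the preimage
`H` of the centralizer of `xN` has `p'`-index and contains `x`, hence contains a Sylow subgroup
`P ∋ x` of `G`; all of `P` commutes with `x` modulo `N`, hence in `G`, so `C_G(x) ⊇ P` has
`p'`-index.
-/

/-- A group `G` is `cl_p` if its Sylow `p`-subgroups are non-abelian and every `p`-element
of `G` has conjugacy class size coprime to `p`. -/
def IsClP (p : ℕ) (G : Type*) [Group G] : Prop :=
  (∀ P : Sylow p G, ¬ IsMulCommutative (P : Subgroup G)) ∧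
  ∀ x : G, (∃ n : ℕ, orderOf x = p ^ n) → ¬ p ∣ (Subgroup.centralizer {x}).index

open Subgroup

section

variable {G : Type*} [Group G] {p : ℕ} [Fact p.Prime]

theorem IsPGroup.inf_eq_bot_of_not_dvd_card {K N : Subgroup G} (hK : IsPGroup p K)
    (hN : ¬ p ∣ Nat.card N) : K ⊓ N = ⊥ := by
  rcases (hK.to_inf_left (K := N)).card_eq_or_dvd with h1 | hdvd
  · exact Subgroup.card_eq_one.mp h1
  · exact absurd (hdvd.trans (card_dvd_of_le inf_le_right)) hN

theorem QuotientGroup.injOn_mk_of_inf_eq_bot {K N : Subgroup G} (hKN : K ⊓ N = ⊥) :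
    Set.InjOn (QuotientGroup.mk : G → G ⧸ N) K := by
  intro a (ha : a ∈ K) b (hb : b ∈ K) hab
  have hmem : a⁻¹ * b ∈ K ⊓ N :=
    mem_inf.mpr ⟨mul_mem (inv_mem ha) hb, QuotientGroup.eq.mp hab⟩
  rwa [hKN, mem_bot, inv_mul_eq_one] at hmem

theorem QuotientGroup.commute_of_commute_mk {K N : Subgroup G} [N.Normal] (hKN : K ⊓ N = ⊥)
    {x y : G} (hx : x ∈ K) (hy : y ∈ K) (h : Commute (x : G ⧸ N) y) : Commute x y :=
  injOn_mk_of_inf_eq_bot hKN (mul_mem hx hy) (mul_mem hy hx) (by simpa using h.eq)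

theorem exists_orderOf_map_eq_pow {H : Type*} [Group H] (f : G →* H) {x : G}
    (hx : ∃ n, orderOf x = p ^ n) : ∃ m, orderOf (f x) = p ^ m := by
  obtain ⟨n, hn⟩ := hx
  obtain ⟨m, -, hm⟩ := (Nat.dvd_prime_pow Fact.out).mp (hn ▸ orderOf_map_dvd f x)
  exact ⟨m, hm⟩

theorem Sylow.exists_mem_le_of_not_dvd_index [Finite G] {H : Subgroup G}
    (hH : ¬ p ∣ H.index) {x : G} (hxH : x ∈ H) (hx : ∃ n, orderOf x = p ^ n) :
    ∃ P : Sylow p G, x ∈ P ∧ (P : Subgroup G) ≤ H := by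
  obtain ⟨n, hn⟩ := hx
  have hpx : IsPGroup p (zpowers (⟨x, hxH⟩ : H)) :=
    IsPGroup.of_card (by rw [Nat.card_zpowers, orderOf_mk, hn])
  obtain ⟨Q, hxQ⟩ := hpx.exists_le_sylow
  have hQ : ¬ p ∣ (Q.map H.subtype).index := by
    rw [index_map_subtype]
    exact Nat.Prime.not_dvd_mul Fact.out Q.not_dvd_index hH
  exact ⟨(Q.2.map H.subtype).toSylow hQ, ⟨_, hxQ (mem_zpowers _), rfl⟩, map_subtype_le _⟩

variable {N : Subgroup G} [N.Normal]

theorem Sylow.isMulCommutative_map_mk'_iff (hN : ¬ p ∣ Nat.card N) (P : Sylow p G) :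
    IsMulCommutative ((P : Subgroup G).map (QuotientGroup.mk' N)) ↔
      IsMulCommutative (P : Subgroup G) := by
  refine ⟨fun _ => .of_setLike_mul_comm fun a (ha : a ∈ P) b (hb : b ∈ P) => ?_,
    fun _ => inferInstance⟩
  exact QuotientGroup.commute_of_commute_mk (P.2.inf_eq_bot_of_not_dvd_card hN) ha hb
    (setLike_mul_comm (mem_map_of_mem (QuotientGroup.mk' N) ha) (mem_map_of_mem _ hb))

theorem forall_sylow_quotient_not_isMulCommutative_iff [Finite G] (hN : ¬ p ∣ Nat.card N) :
    (∀ P : Sylow p (G ⧸ N), ¬ IsMulCommutative (P : Subgroup (G ⧸ N))) ↔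
      ∀ P : Sylow p G, ¬ IsMulCommutative (P : Subgroup G) := by
  rw [(Sylow.mapSurjective_surjective (QuotientGroup.mk'_surjective N) p).forall]
  exact forall_congr' fun P => not_congr (P.isMulCommutative_map_mk'_iff hN)

theorem not_dvd_index_centralizer_of_mk [Finite G] (hN : ¬ p ∣ Nat.card N) {x : G}
    (hx : ∃ n, orderOf x = p ^ n)
    (hxN : ¬ p ∣ (centralizer {(x : G ⧸ N)}).index) : ¬ p ∣ (centralizer {x}).index := by
  have hH : ¬ p ∣ ((centralizer {(x : G ⧸ N)}).comap (QuotientGroup.mk' N)).index := by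
    rwa [index_comap_of_surjective _ (QuotientGroup.mk'_surjective N)]
  obtain ⟨P, hxP, hPH⟩ :=
    Sylow.exists_mem_le_of_not_dvd_index hH (mem_centralizer_singleton_iff.mpr rfl) hx
  have hPC : (P : Subgroup G) ≤ centralizer {x} := fun q hq =>
    mem_centralizer_singleton_iff.mpr <| QuotientGroup.commute_of_commute_mk
      (P.2.inf_eq_bot_of_not_dvd_card hN) hq hxP (mem_centralizer_singleton_iff.mp (hPH hq))
  exact fun hdvd => P.not_dvd_index (hdvd.trans (index_dvd_of_le hPC))

end

/-- Let `N ⊴ G` with `p ∤ |N|`. If every `p`-element of `G/N` has class size coprime to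
`p`, then every `p`-element of `G` does; moreover `G` is `cl_p` iff `G/N` is `cl_p`. -/
theorem clp_lift_from_quotient {G : Type*} [Group G] [Finite G] (p : ℕ) [Fact p.Prime]
    (N : Subgroup G) [N.Normal] (hN : ¬ p ∣ Nat.card N)
    (h : ∀ x : G ⧸ N, (∃ n : ℕ, orderOf x = p ^ n) →
      ¬ p ∣ (Subgroup.centralizer {x} : Subgroup (G ⧸ N)).index) :
    (∀ x : G, (∃ n : ℕ, orderOf x = p ^ n) → ¬ p ∣ (Subgroup.centralizer {x}).index) ∧
    (IsClP p G ↔ IsClP p (G ⧸ N)) := by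
  have hG : ∀ x : G, (∃ n : ℕ, orderOf x = p ^ n) → ¬ p ∣ (centralizer {x}).index :=
    fun x hx => not_dvd_index_centralizer_of_mk hN hx
      (h _ (exists_orderOf_map_eq_pow (QuotientGroup.mk' N) hx))
  have hSylow := forall_sylow_quotient_not_isMulCommutative_iff (p := p) hN
  exact ⟨hG, fun hG' => ⟨hSylow.mpr hG'.1, h⟩, fun hQ => ⟨hSylow.mp hQ.1, hG⟩⟩
end

section
/- Let G be a finite group and p a prime such that the conjugacy class size of every p-element of G is coprime to p. Then O_p(G) is contained in the center of every Sylow p-subgroup of G; in particular O_p(G) ≤ Z(P) for any P ∈ Syl_p(G). -/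
/-- The `p`-core `O_p(G)`: the largest normal `p`-subgroup of `G` (the join of all
normal `p`-subgroups). -/
def pCore (p : ℕ) (G : Type*) [Group G] : Subgroup G :=
  ⨆ (N : Subgroup G) (_ : N.Normal) (_ : IsPGroup p ↥N), N

/-! Every `y` in a Sylow `p`-subgroup is a `p`-element, so `p ∤ |G : C_G(y)|` and some Sylow
`p`-subgroup `R` lies in `C_G(y)`. A normal `p`-subgroup lies in every Sylow `p`-subgroup, hence
`O_p(G) ≤ R ≤ C_G(y)`. -/

theorem pCore_le_sylow {G : Type*} [Group G] {p : ℕ} (P : Sylow p G) : pCore p G ≤ P :=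
  iSup_le fun _ => iSup_le fun _ => iSup_le fun hN => hN.le_sylow_of_normal P

theorem Sylow.exists_le_of_not_dvd_index {G : Type*} [Group G] [Finite G] {p : ℕ}
    [Fact p.Prime] {H : Subgroup G} (hH : ¬ p ∣ H.index) : ∃ P : Sylow p G, (P : Subgroup G) ≤ H := by
  obtain ⟨Q⟩ : Nonempty (Sylow p H) := inferInstance
  have hQ : ¬ p ∣ ((Q : Subgroup H).map H.subtype).index := by
    rw [Subgroup.index_map_subtype]
    exact Nat.Prime.not_dvd_mul Fact.out Q.not_dvd_index hH
  exact ⟨(Q.isPGroup'.map H.subtype).toSylow hQ, Subgroup.map_subtype_le _⟩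

theorem Sylow.exists_orderOf_eq_pow {G : Type*} [Group G] {p : ℕ} [Fact p.Prime]
    (P : Sylow p G) {y : G} (hy : y ∈ P) : ∃ n : ℕ, orderOf y = p ^ n := by
  simpa using IsPGroup.iff_orderOf.mp P.isPGroup' ⟨y, hy⟩

/-- If every `p`-element of the finite group `G` has class size coprime to `p`, then
`O_p(G)` is contained in the centre of every Sylow `p`-subgroup of `G`. -/
theorem pCore_le_center_sylow {G : Type*} [Group G] [Finite G] (p : ℕ) [Fact p.Prime]
    (h : ∀ x : G, (∃ n : ℕ, orderOf x = p ^ n) → ¬ p ∣ (Subgroup.centralizer {x}).index)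
    (P : Sylow p G) :
    ∀ x ∈ pCore p G, x ∈ (P : Subgroup G) ∧ ∀ y ∈ (P : Subgroup G), x * y = y * x := by
  intro x hx
  refine ⟨pCore_le_sylow P hx, fun y hy => ?_⟩
  obtain ⟨R, hR⟩ := Sylow.exists_le_of_not_dvd_index (h y (P.exists_orderOf_eq_pow hy))
  exact Subgroup.mem_centralizer_singleton_iff.mp (hR (pCore_le_sylow R hx))
end

section
/- Let G be a finite group, p a prime, such that O^{p'}(G) = G (G has no nontrivial p'-quotient) and every p-element of G has class size coprime to p. Then O_p(G) ≤ Z(G). -/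
/-- A normal `p`-subgroup is contained in every subgroup of index coprime to `p`. -/
theorem normal_pSubgroup_le_of_not_dvd_index {G : Type*} [Group G] {p : ℕ} [Fact p.Prime]
    {N H : Subgroup G} (hN : N.Normal) (hNp : IsPGroup p ↥N) (hH : ¬ p ∣ H.index) :
    N ≤ H := by
  -- N acts on G ⧸ H; since p ∤ card (G ⧸ H), there is a fixed point.
  obtain ⟨x, hx⟩ := hNp.nonempty_fixed_point_of_prime_not_dvd_card (G ⧸ H)
    (by rwa [← Subgroup.index_eq_card])
  obtain ⟨g, rfl⟩ := QuotientGroup.mk_surjective x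
  intro n hn
  have hmem : (⟨g * n * g⁻¹, hN.conj_mem n hn g⟩ : N) • (g : G ⧸ H) = (g : G ⧸ H) :=
    hx _
  have : ((g * n * g⁻¹) * g : G ⧸ H) = (g : G ⧸ H) := by
    exact hmem
  have h2 : g⁻¹ * ((g * n * g⁻¹) * g) ∈ H := (QuotientGroup.eq (s := H)).mp this.symm
  simpa [mul_assoc] using h2

/-- If a finite group `G` has no nontrivial `p'`-quotient (i.e. `O^{p'}(G) = G`: every
normal subgroup of index coprime to `p` is all of `G`), and every `p`-element of `G` has
class size coprime to `p`, then `O_p(G) ≤ Z(G)`. -/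
theorem pCore_le_center {G : Type*} [Group G] [Finite G] (p : ℕ) [Fact p.Prime]
    (hquot : ∀ N : Subgroup G, N.Normal → ¬ p ∣ N.index → N = ⊤)
    (h : ∀ x : G, (∃ n : ℕ, orderOf x = p ^ n) → ¬ p ∣ (Subgroup.centralizer {x}).index) :
    pCore p G ≤ Subgroup.center G := by
  refine iSup_le fun N => iSup_le fun hN => iSup_le fun hNp => ?_
  -- the centralizer of N
  set C := Subgroup.centralizer (N : Set G) with hC
  have hCnormal : C.Normal := by
    constructor
    intro c hc g
    rw [hC, Subgroup.mem_centralizer_iff] at hc ⊢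
    intro n hn
    have hn' : g⁻¹ * n * g ∈ N := by simpa using hN.conj_mem n hn g⁻¹
    have := hc _ hn'
    -- (g⁻¹ n g) c = c (g⁻¹ n g)  ⟹  n (g c g⁻¹) = (g c g⁻¹) n
    have : g * ((g⁻¹ * n * g) * c) * g⁻¹ = g * (c * (g⁻¹ * n * g)) * g⁻¹ := by rw [this]
    calc n * (g * c * g⁻¹) = g * ((g⁻¹ * n * g) * c) * g⁻¹ := by group
    _ = g * (c * (g⁻¹ * n * g)) * g⁻¹ := this
    _ = g * c * g⁻¹ * n := by group
  -- every p-element lies in C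
  have hp_elem : ∀ g : G, (∃ n : ℕ, orderOf g = p ^ n) → g ∈ C := by
    intro g hg
    have hle : N ≤ Subgroup.centralizer {g} :=
      normal_pSubgroup_le_of_not_dvd_index hN hNp (h g hg)
    rw [hC, Subgroup.mem_centralizer_iff]
    intro n hn
    have := Subgroup.mem_centralizer_iff.mp (hle hn) g (Set.mem_singleton g)
    exact this.symm
  -- a Sylow p-subgroup is contained in C, so p ∤ C.index
  obtain ⟨P⟩ : Nonempty (Sylow p G) := inferInstance
  have hPle : (P : Subgroup G) ≤ C := by
    intro g hg
    refine hp_elem g ?_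
    obtain ⟨n, hn⟩ := IsPGroup.iff_orderOf.mp P.2 (⟨g, hg⟩ : (P : Subgroup G))
    exact ⟨n, by rwa [Subgroup.orderOf_mk] at hn⟩
  have hCindex : ¬ p ∣ C.index := by
    intro hdvd
    exact P.not_dvd_index (hdvd.trans (Subgroup.index_dvd_of_le hPle))
  have hCtop : C = ⊤ := hquot C hCnormal hCindex
  -- conclude N ≤ center
  intro n hn
  rw [Subgroup.mem_center_iff]
  intro g
  have hg : g ∈ C := hCtop ▸ Subgroup.mem_top g
  exact (Subgroup.mem_centralizer_iff.mp hg n hn).symm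
end

section
/- Let G be a finite group and p a prime. Suppose K ⊴ G with G/K of order p, and suppose there exists a p-element x ∈ G \ K whose centralizer contains a Sylow p-subgroup of G. If the Sylow p-subgroups of K are abelian, then the Sylow p-subgroups of G are abelian. -/
/-!
Fix a Sylow subgroup `P` centralized by `x`. Then `⟨x⟩` normalizes `P`, so the `p`-element `x`
lies in `P`. Since `K` has prime index, `K⟨x⟩ = G`, and Dedekind's argument gives
`P = (P ∩ K)⟨x⟩`. The `p`-subgroup `P ∩ K` of `K` lies in an abelian Sylow subgroup of `K`, and
`x` is central in `P`, so `P` is abelian; the other Sylow subgroups are conjugate to it.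
-/

open Subgroup

theorem MulEquiv.isMulCommutative {M N : Type*} [Mul M] [Mul N] (e : M ≃* N)
    [IsMulCommutative M] : IsMulCommutative N :=
  .of_comm fun a b => e.symm.injective (by simp only [map_mul]; exact mul_comm' _ _)

namespace Subgroup

variable {G : Type*} [Group G]

theorem isMulCommutative_of_le_s18 {H K : Subgroup G} (h : H ≤ K) [IsMulCommutative K] :
    IsMulCommutative H :=
  le_centralizer_iff_isMulCommutative.mp (h.trans ((le_centralizer K).trans (centralizer_le h)))

theorem isMulCommutative_sup_zpowers (A : Subgroup G) [IsMulCommutative A] {x : G}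
    (hx : x ∈ centralizer A) : IsMulCommutative (A ⊔ zpowers x : Subgroup G) := by
  rw [zpowers_eq_closure, ← closure_eq A, ← closure_union]
  refine isMulCommutative_closure ?_
  rintro a (ha | rfl) b (hb | rfl)
  · exact setLike_mul_comm ha hb
  · exact hx a ha
  · exact (hx b hb).symm
  · rfl

theorem isCoatom_of_prime_index {K : Subgroup G} (hK : K.index.Prime) : IsCoatom K := by
  refine ⟨fun h => hK.ne_one (index_eq_one.mpr h), fun L hKL => ?_⟩
  rcases (Nat.dvd_prime hK).mp (index_dvd_of_le hKL.le) with h | h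
  · exact index_eq_one.mp h
  · have hmul := relIndex_mul_index hKL.le
    rw [h, Nat.mul_eq_right hK.ne_zero, relIndex_eq_one] at hmul
    exact absurd hmul hKL.not_ge

theorem le_inf_sup_of_sup_eq_top {H K C : Subgroup G} [K.Normal] (hC : C ≤ H)
    (hKC : K ⊔ C = ⊤) : H ≤ H ⊓ K ⊔ C := by
  intro a ha
  obtain ⟨k, hk, c, hc, rfl⟩ := mem_sup_of_normal_left.mp (hKC ▸ mem_top a)
  have hkH : k ∈ H := by simpa using H.mul_mem ha (H.inv_mem (hC hc))
  exact mul_mem_sup ⟨hkH, hk⟩ hc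

end Subgroup

theorem IsPGroup.isMulCommutative_inf {G : Type*} [Group G] {p : ℕ} {H K : Subgroup G}
    (hH : IsPGroup p H) (hK : ∀ Q : Sylow p K, IsMulCommutative (Q : Subgroup K)) :
    IsMulCommutative (H ⊓ K : Subgroup G) := by
  obtain ⟨Q, hQ⟩ := (hH.comap_subtype (K := K)).exists_le_sylow
  have := hK Q
  have : IsMulCommutative (H.subgroupOf K) := isMulCommutative_of_le_s18 hQ
  rw [← subgroupOf_map_subtype]
  exact map_isMulCommutative _ _

theorem Sylow.mem_of_le_centralizer {G : Type*} [Group G] {p : ℕ} (P : Sylow p G) {x : G}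
    (hx : IsPGroup p (zpowers x)) (hP : (P : Subgroup G) ≤ centralizer {x}) : x ∈ P := by
  have hxc : zpowers x ≤ centralizer P :=
    le_centralizer_iff.mp (by rwa [zpowers_eq_closure, centralizer_closure])
  have hx_norm : x ∈ zpowers x ⊓ normalizer (P : Subgroup G) :=
    ⟨mem_zpowers x, centralizer_le_normalizer _ (hxc (mem_zpowers x))⟩
  exact (hx.inf_normalizer_sylow P ▸ hx_norm).2

/-- Let `K ⊴ G` with `|G : K| = p`, and suppose some `p`-element `x ∉ K` has a Sylow
`p`-subgroup of `G` inside its centralizer. If the Sylow `p`-subgroups of `K` are abelian,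
then the Sylow `p`-subgroups of `G` are abelian. -/
theorem sylow_abelian_of_index_p {G : Type*} [Group G] [Finite G] (p : ℕ) [Fact p.Prime]
    (K : Subgroup G) [K.Normal] (hK : K.index = p)
    (x : G) (hxK : x ∉ K) (hx : ∃ n : ℕ, orderOf x = p ^ n)
    (hcent : ∃ P : Sylow p G, (P : Subgroup G) ≤ Subgroup.centralizer {x})
    (hab : ∀ Q : Sylow p ↥K, IsMulCommutative ↥(Q : Subgroup ↥K)) :
    ∀ P : Sylow p G, IsMulCommutative ↥(P : Subgroup G) := by
  obtain ⟨P, hP⟩ := hcent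
  obtain ⟨n, hn⟩ := hx
  have hxP : x ∈ P := P.mem_of_le_centralizer (.of_card ((Nat.card_zpowers x).trans hn)) hP
  have hKx : K ⊔ zpowers x = ⊤ :=
    (isCoatom_of_prime_index (hK ▸ Fact.out)).2 _ (left_lt_sup.mpr (by rwa [zpowers_le]))
  have := P.2.isMulCommutative_inf hab
  have := isMulCommutative_sup_zpowers (P ⊓ K) (x := x) fun g hg => (hP hg.1 x rfl).symm
  have : IsMulCommutative P :=
    isMulCommutative_of_le_s18 (le_inf_sup_of_sup_eq_top (zpowers_le.mpr hxP) hKx)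
  exact fun Q => (P.equiv Q).isMulCommutative
end
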